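/- Let L, π, Ψ, δ be positive real numbers with 2Ψπ > L. Define p(y) = (L/(2Ψ))·(2Ψπ/L)^(y/δ). Then p is differentiable with derivative p'(y) = p(y)·ln(2Ψπ/L)/δ, and for every real α with α ≥ ln(2Ψπ/L) and α > 0, and every y ∈ [0, δ), the Differential Allocation-Payment Relationship with zero marginal cost and conjugate derivative δ holds: p(y) ≥ (1/α)·δ·(deriv p y). -/

import Mathlib

theorem hasDerivAt_const_mul_rpow_div (c δ : ℝ) {b : ℝ} (hb : 0 < b) (y : ℝ) :
    HasDerivAt (fun y => c * b ^ (y / δ)) (c * b ^ (y / δ) * Real.log b / δ) y := by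
  have h := (((hasDerivAt_id' y).div_const δ).const_rpow hb).const_mul c
  exact h.congr_deriv (by ring)

theorem generation_dual_first_branch_general
    (L π Ψ δ : ℝ) (hL : 0 < L) (hπ : 0 < π) (hΨ : 0 < Ψ) (hδ : 0 < δ)
    (p : ℝ → ℝ)
    (hp : ∀ y, p y = (L / (2 * Ψ)) * (2 * Ψ * π / L) ^ (y / δ)) :
    (∀ y : ℝ, DifferentiableAt ℝ p y ∧
        deriv p y = p y * Real.log (2 * Ψ * π / L) / δ) ∧
    (∀ α : ℝ, α ≥ Real.log (2 * Ψ * π / L) → 0 < α →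
      ∀ y ∈ Set.Ico (0 : ℝ) δ, p y ≥ (1 / α) * δ * deriv p y) := by
  obtain rfl : p = fun y => L / (2 * Ψ) * (2 * Ψ * π / L) ^ (y / δ) := funext hp
  have hderiv (y : ℝ) := hasDerivAt_const_mul_rpow_div (L / (2 * Ψ)) δ
    (by positivity : 0 < 2 * Ψ * π / L) y
  refine ⟨fun y => ⟨(hderiv y).differentiableAt, (hderiv y).deriv⟩,
    fun α hα hα₀ y _ => ?_⟩
  set b := 2 * Ψ * π / L
  set q := L / (2 * Ψ) * b ^ (y / δ)
  rw [(hderiv y).deriv]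
  calc (1 / α) * δ * (q * Real.log b / δ) = q * (Real.log b / α) := by field_simp
    _ ≤ q := mul_le_of_le_one_right (by positivity) (div_le_one_of_le₀ hα hα₀.le)

/-- First branch of the generation dual update function:
`p(y) = (L/(2Ψ))·(2Ψπ/L)^(y/δ)` is differentiable with
`p'(y) = p(y)·ln(2Ψπ/L)/δ`, and satisfies the Differential Allocation-Payment
Relationship with zero marginal cost and conjugate derivative `δ` on `[0, δ)`. -/
theorem generation_dual_first_branch
    (L π Ψ δ : ℝ) (hL : 0 < L) (hπ : 0 < π) (hΨ : 0 < Ψ) (hδ : 0 < δ)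
    (hπL : 2 * Ψ * π > L)
    (p : ℝ → ℝ)
    (hp : ∀ y, p y = (L / (2 * Ψ)) * (2 * Ψ * π / L) ^ (y / δ)) :
    (∀ y : ℝ, DifferentiableAt ℝ p y ∧
        deriv p y = p y * Real.log (2 * Ψ * π / L) / δ) ∧
    (∀ α : ℝ, α ≥ Real.log (2 * Ψ * π / L) → 0 < α →
      ∀ y ∈ Set.Ico (0 : ℝ) δ, p y ≥ (1 / α) * δ * deriv p y) :=
  generation_dual_first_branch_general L π Ψ δ hL hπ hΨ hδ p hp
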